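/- arXiv:2401.05165 — 10 statements merged into one kernel-verified Lean document; each statement's English description precedes it below -/
import Mathlib

section
/- Let P be a nonempty lattice and 𝒳 a type of variables. A finite set Ψ of constraints over (P, 𝒳) is satisfiable if and only if Ψ is value-consistent, i.e. a ≤ b holds for all values a, b ∈ V_Ψ with (Sum.inl a, Sum.inl b) ∈ R_Ψ⁺. -/
/-- Evaluation of a term (value or variable) under an assignment. -/
def ConstraintEval {P 𝒳 : Type*} (σ : 𝒳 → P) : P ⊕ 𝒳 → P
  | Sum.inl d => d
  | Sum.inr x => σ x

/-- A pair is a constraint if it is of one of the three allowed forms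
(lower bound, variable constraint, upper bound). -/
def IsConstraint {P 𝒳 : Type*} : (P ⊕ 𝒳) × (P ⊕ 𝒳) → Prop
  | (Sum.inl _, Sum.inl _) => False
  | _ => True

/-- A set of pairs consists only of well-formed constraints. -/
def WellFormed {P 𝒳 : Type*} (Ψ : Set ((P ⊕ 𝒳) × (P ⊕ 𝒳))) : Prop :=
  ∀ c ∈ Ψ, IsConstraint c

/-- σ is a model of Ψ. -/
def Models {P 𝒳 : Type*} [Preorder P] (σ : 𝒳 → P) (Ψ : Set ((P ⊕ 𝒳) × (P ⊕ 𝒳))) : Prop :=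
  ∀ c ∈ Ψ, ConstraintEval σ c.1 ≤ ConstraintEval σ c.2

/-- Ψ is satisfiable. -/
def Satisfiable {P 𝒳 : Type*} [Preorder P] (Ψ : Set ((P ⊕ 𝒳) × (P ⊕ 𝒳))) : Prop :=
  ∃ σ : 𝒳 → P, Models σ Ψ

/-- The set V_Ψ of values occurring in constraints of Ψ. -/
def Values {P 𝒳 : Type*} (Ψ : Set ((P ⊕ 𝒳) × (P ⊕ 𝒳))) : Set P :=
  {d | ∃ t : P ⊕ 𝒳, (Sum.inl d, t) ∈ Ψ ∨ (t, Sum.inl d) ∈ Ψ}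

/-- The relation R_Ψ: the constraints of Ψ together with all pairs
(inl a, inl b) for values a, b of Ψ with a ≤ b. -/
def ConRel {P 𝒳 : Type*} [Preorder P] (Ψ : Set ((P ⊕ 𝒳) × (P ⊕ 𝒳))) (s t : P ⊕ 𝒳) : Prop :=
  (s, t) ∈ Ψ ∨
    ∃ a b : P, a ∈ Values Ψ ∧ b ∈ Values Ψ ∧ a ≤ b ∧ s = Sum.inl a ∧ t = Sum.inl b

/-- R_Ψ⁺, the transitive closure of R_Ψ. -/
def ConRelTC {P 𝒳 : Type*} [Preorder P] (Ψ : Set ((P ⊕ 𝒳) × (P ⊕ 𝒳))) : P ⊕ 𝒳 → P ⊕ 𝒳 → Prop :=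
  Relation.TransGen (ConRel Ψ)

/-- Ψ is value-consistent: a ≤ b for all values a, b of Ψ with
(inl a, inl b) in the transitive closure R_Ψ⁺. -/
def ValueConsistent {P 𝒳 : Type*} [Preorder P] (Ψ : Set ((P ⊕ 𝒳) × (P ⊕ 𝒳))) : Prop :=
  ∀ a b : P, a ∈ Values Ψ → b ∈ Values Ψ →
    ConRelTC Ψ (Sum.inl a) (Sum.inl b) → a ≤ b

/-- Over a nonempty lattice, a finite set of constraints is
satisfiable iff it is value-consistent. -/
theorem satisfiable_iff_valueConsistent_of_lattice
    {P 𝒳 : Type*} [Lattice P] [Nonempty P]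
    (Ψ : Set ((P ⊕ 𝒳) × (P ⊕ 𝒳))) (hfin : Ψ.Finite) (hwf : WellFormed Ψ) :
    Satisfiable Ψ ↔ ValueConsistent Ψ := by
  classical
  constructor
  · rintro ⟨σ, hσ⟩ a b _ _ htc
    have key : ∀ s t, ConRelTC Ψ s t → ConstraintEval σ s ≤ ConstraintEval σ t := by
      intro s t h
      have base : ∀ u v, ConRel Ψ u v → ConstraintEval σ u ≤ ConstraintEval σ v := by
        rintro u v (h | ⟨a', b', _, _, hab, rfl, rfl⟩)
        · exact hσ _ h
        · exact hab
      induction h with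
      | single h => exact base _ _ h
      | tail _ h ih => exact le_trans ih (base _ _ h)
    exact key _ _ htc
  · intro hvc
    -- finiteness of Values
    have hVfin : (Values Ψ).Finite := by
      have h1 : Values Ψ ⊆ Sum.inl ⁻¹' (Prod.fst '' Ψ ∪ Prod.snd '' Ψ) := by
        rintro d ⟨t, h | h⟩
        · exact Or.inl ⟨_, h, rfl⟩
        · exact Or.inr ⟨_, h, rfl⟩
      exact Set.Finite.subset
        (((hfin.image Prod.fst).union (hfin.image Prod.snd)).preimage
          Sum.inl_injective.injOn) h1
    by_cases hV : (Values Ψ).Nonempty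
    · have hVf : hVfin.toFinset.Nonempty := by
        simpa [Set.Finite.toFinset_nonempty] using hV
      set m : P := hVfin.toFinset.inf' hVf id with hm
      have hLfin : ∀ x : 𝒳,
          {d | d ∈ Values Ψ ∧ ConRelTC Ψ (Sum.inl d) (Sum.inr x)}.Finite :=
        fun x => hVfin.subset (fun d hd => hd.1)
      set σ : 𝒳 → P := fun x =>
        (insert m ((hLfin x).toFinset)).sup' (Finset.insert_nonempty _ _) id with hσdef
      have hmem : ∀ x d, d ∈ Values Ψ → ConRelTC Ψ (Sum.inl d) (Sum.inr x) → d ≤ σ x := by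
        intro x d hd htc
        exact Finset.le_sup' id (Finset.mem_insert_of_mem (by simp [hLfin, hd, htc]))
      refine ⟨σ, ?_⟩
      rintro ⟨s, t⟩ hc
      match s, t with
      | Sum.inl d, Sum.inl e => exact absurd (hwf _ hc) (by simp [IsConstraint])
      | Sum.inl d, Sum.inr x =>
        exact hmem x d ⟨Sum.inr x, Or.inl hc⟩ (Relation.TransGen.single (Or.inl hc))
      | Sum.inr x, Sum.inr y =>
        show σ x ≤ σ y
        apply Finset.sup'_le
        intro e he
        rcases Finset.mem_insert.mp he with rfl | he
        · exact Finset.le_sup' id (Finset.mem_insert_self _ _)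
        · rw [Set.Finite.mem_toFinset] at he
          exact hmem y e he.1 (he.2.tail (Or.inl hc))
      | Sum.inr x, Sum.inl d =>
        show σ x ≤ d
        have hdV : d ∈ Values Ψ := ⟨Sum.inr x, Or.inr hc⟩
        apply Finset.sup'_le
        intro e he
        rcases Finset.mem_insert.mp he with rfl | he
        · exact Finset.inf'_le id (by simpa using hdV)
        · rw [Set.Finite.mem_toFinset] at he
          exact hvc e d he.1 hdV (he.2.tail (Or.inl hc))
    · refine ⟨fun _ => Classical.arbitrary P, ?_⟩
      rintro ⟨s, t⟩ hc
      match s, t with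
      | Sum.inl d, t' => exact absurd ⟨t', Or.inl hc⟩ (fun h => hV ⟨d, h⟩)
      | Sum.inr x, Sum.inl d => exact absurd ⟨Sum.inr x, Or.inr hc⟩ (fun h => hV ⟨d, h⟩)
      | Sum.inr x, Sum.inr y => exact le_refl _
end

section
/- Let P be a nonempty partial order that is bounded-complete (every subset of P that has an upper bound has a least upper bound), and let Ψ be a finite set of constraints over (P, 𝒳) that is bounded, i.e. every variable x occurring in some constraint of Ψ has an upper-bound constraint (Sum.inr x, Sum.inl d) ∈ Ψ for some d ∈ P. Then Ψ is satisfiable if and only if Ψ is value-consistent, i.e. a ≤ b holds for all values a, b ∈ V_Ψ with (Sum.inl a, Sum.inl b) ∈ R_Ψ⁺. -/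
/-- P is bounded-complete: every subset with an upper bound has a least upper bound. -/
def BoundedComplete (P : Type*) [PartialOrder P] : Prop :=
  ∀ S : Set P, (∃ b : P, b ∈ upperBounds S) → ∃ l : P, IsLUB S l

/-- Ψ is bounded: every variable occurring in Ψ has an upper-bound constraint in Ψ. -/
def BoundedConstraints {P 𝒳 : Type*} (Ψ : Set ((P ⊕ 𝒳) × (P ⊕ 𝒳))) : Prop :=
  ∀ x : 𝒳, (∃ t : P ⊕ 𝒳, (Sum.inr x, t) ∈ Ψ ∨ (t, Sum.inr x) ∈ Ψ) →
    ∃ d : P, (Sum.inr x, Sum.inl d) ∈ Ψ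

/-- Over a nonempty bounded-complete partial order, a bounded finite
set of constraints is satisfiable iff it is value-consistent. -/
theorem satisfiable_iff_valueConsistent_of_boundedComplete
    {P 𝒳 : Type*} [PartialOrder P] [Nonempty P] (hbc : BoundedComplete P)
    (Ψ : Set ((P ⊕ 𝒳) × (P ⊕ 𝒳))) (hfin : Ψ.Finite) (hwf : WellFormed Ψ)
    (hbd : BoundedConstraints Ψ) :
    Satisfiable Ψ ↔ ValueConsistent Ψ := by
  constructor
  · rintro ⟨σ, hσ⟩ a b _ _ htc
    have key : ∀ s t, ConRelTC Ψ s t → ConstraintEval σ s ≤ ConstraintEval σ t := by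
      intro s t h
      induction h with
      | single h =>
        rcases h with h | ⟨a, b, _, _, hab, rfl, rfl⟩
        · exact hσ _ h
        · exact hab
      | tail h1 h2 ih =>
        refine le_trans ih ?_
        rcases h2 with h | ⟨a, b, _, _, hab, rfl, rfl⟩
        · exact hσ _ h
        · exact hab
    exact key _ _ htc
  · intro hcons
    classical
    have hub : ∀ x : 𝒳, ∃ b : P,
        b ∈ upperBounds {a | a ∈ Values Ψ ∧ ConRelTC Ψ (Sum.inl a) (Sum.inr x)} := by
      intro x
      by_cases hne : {a | a ∈ Values Ψ ∧ ConRelTC Ψ (Sum.inl a) (Sum.inr x)}.Nonempty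
      · obtain ⟨a0, ha0V, ha0⟩ := hne
        have hocc : ∃ t, (t, Sum.inr x) ∈ Ψ := by
          cases ha0 with
          | single h =>
            rcases h with h | ⟨_, _, _, _, _, _, h⟩
            · exact ⟨_, h⟩
            · exact absurd h (by simp)
          | tail h1 h2 =>
            rcases h2 with h | ⟨_, _, _, _, _, _, h⟩
            · exact ⟨_, h⟩
            · exact absurd h (by simp)
        obtain ⟨t, ht⟩ := hocc
        obtain ⟨d, hd⟩ := hbd x ⟨t, Or.inr ht⟩
        refine ⟨d, fun a ha => ?_⟩
        exact hcons a d ha.1 ⟨Sum.inr x, Or.inr hd⟩ (ha.2.tail (Or.inl hd))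
      · exact ⟨Classical.arbitrary P, fun a ha => absurd ⟨a, ha⟩ hne⟩
    choose σ hσ using fun x =>
      hbc {a | a ∈ Values Ψ ∧ ConRelTC Ψ (Sum.inl a) (Sum.inr x)} (hub x)
    refine ⟨σ, ?_⟩
    rintro ⟨s, t⟩ hc
    match s, t with
    | Sum.inl a, Sum.inl b => exact absurd (hwf _ hc) (by simp [IsConstraint])
    | Sum.inl a, Sum.inr x =>
      exact (hσ x).1 ⟨⟨Sum.inr x, Or.inl hc⟩, Relation.TransGen.single (Or.inl hc)⟩
    | Sum.inr x, Sum.inr y =>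
      exact (hσ x).2 (fun a ha => (hσ y).1 ⟨ha.1, ha.2.tail (Or.inl hc)⟩)
    | Sum.inr x, Sum.inl d =>
      exact (hσ x).2 (fun a ha =>
        hcons a d ha.1 ⟨Sum.inr x, Or.inr hc⟩ (ha.2.tail (Or.inl hc)))
end

section
/- Let P be a nonempty lattice and Ψ a finite set of constraints over (P, 𝒳) that is closed (every pair (s, t) ∈ R_Ψ⁺ in which s or t is a variable belongs to Ψ) and value-consistent (a ≤ b for all a, b ∈ V_Ψ with (Sum.inl a, Sum.inl b) ∈ R_Ψ⁺). Let Y be a set of variables and σ₀ : 𝒳 → P an assignment that satisfies every constraint of Ψ all of whose variables lie in Y. Then there exists a model σ of Ψ with σ y = σ₀ y for every y ∈ Y. -/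
/-- Ψ is closed: every pair of the transitive closure R_Ψ⁺ in which a variable
occurs already belongs to Ψ. -/
def Closed {P 𝒳 : Type*} [Preorder P] (Ψ : Set ((P ⊕ 𝒳) × (P ⊕ 𝒳))) : Prop :=
  ∀ s t : P ⊕ 𝒳, ConRelTC Ψ s t →
    ((∃ x : 𝒳, s = Sum.inr x) ∨ (∃ x : 𝒳, t = Sum.inr x)) → (s, t) ∈ Ψ

/-- All variables of a term lie in Y. -/
def VarsIn {P 𝒳 : Type*} (Y : Set 𝒳) : P ⊕ 𝒳 → Prop
  | Sum.inl _ => True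
  | Sum.inr x => x ∈ Y

-- Finite set of "lower bounds" of a variable `x`: evaluations under `σ₀` of left-hand
-- sides of constraints of `Ψf` with right-hand side `x`, whose variables lie in `Y`.
open Classical in
noncomputable def LBnds {P 𝒳 : Type*} (Ψf : Finset ((P ⊕ 𝒳) × (P ⊕ 𝒳))) (Y : Set 𝒳)
    (σ₀ : 𝒳 → P) (x : 𝒳) : Finset P :=
  (Ψf.filter (fun c => c.2 = Sum.inr x ∧ VarsIn Y c.1)).image (fun c => ConstraintEval σ₀ c.1)

open Classical in
lemma mem_LBnds {P 𝒳 : Type*} {Ψf : Finset ((P ⊕ 𝒳) × (P ⊕ 𝒳))} {Y : Set 𝒳}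
    {σ₀ : 𝒳 → P} {x : 𝒳} {a : P} :
    a ∈ LBnds Ψf Y σ₀ x ↔
      ∃ c ∈ Ψf, c.2 = Sum.inr x ∧ VarsIn Y c.1 ∧ ConstraintEval σ₀ c.1 = a := by
  simp [LBnds, Finset.mem_image, Finset.mem_filter, and_assoc]

-- All values appearing (under `σ₀`) in constraints of `Ψf`.
open Classical in
noncomputable def GVals {P 𝒳 : Type*} (Ψf : Finset ((P ⊕ 𝒳) × (P ⊕ 𝒳))) (σ₀ : 𝒳 → P) :
    Finset P :=
  Ψf.image (fun c => ConstraintEval σ₀ c.1) ∪ Ψf.image (fun c => ConstraintEval σ₀ c.2)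

-- Global minimum value.
open Classical in
noncomputable def mVal {P 𝒳 : Type*} [Lattice P] [Nonempty P]
    (Ψf : Finset ((P ⊕ 𝒳) × (P ⊕ 𝒳))) (σ₀ : 𝒳 → P) : P :=
  if h : (GVals Ψf σ₀).Nonempty then (GVals Ψf σ₀).inf' h id else Classical.arbitrary P

open Classical in
lemma mVal_le_fst {P 𝒳 : Type*} [Lattice P] [Nonempty P]
    {Ψf : Finset ((P ⊕ 𝒳) × (P ⊕ 𝒳))} {σ₀ : 𝒳 → P} {c : (P ⊕ 𝒳) × (P ⊕ 𝒳)}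
    (hc : c ∈ Ψf) : mVal Ψf σ₀ ≤ ConstraintEval σ₀ c.1 := by
  have hmem : ConstraintEval σ₀ c.1 ∈ GVals Ψf σ₀ := by
    simp only [GVals, Finset.mem_union, Finset.mem_image]
    exact Or.inl ⟨c, hc, rfl⟩
  rw [mVal, dif_pos ⟨_, hmem⟩]
  exact Finset.inf'_le id hmem

open Classical in
lemma mVal_le_snd {P 𝒳 : Type*} [Lattice P] [Nonempty P]
    {Ψf : Finset ((P ⊕ 𝒳) × (P ⊕ 𝒳))} {σ₀ : 𝒳 → P} {c : (P ⊕ 𝒳) × (P ⊕ 𝒳)}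
    (hc : c ∈ Ψf) : mVal Ψf σ₀ ≤ ConstraintEval σ₀ c.2 := by
  have hmem : ConstraintEval σ₀ c.2 ∈ GVals Ψf σ₀ := by
    simp only [GVals, Finset.mem_union, Finset.mem_image]
    exact Or.inr ⟨c, hc, rfl⟩
  rw [mVal, dif_pos ⟨_, hmem⟩]
  exact Finset.inf'_le id hmem

-- The extended assignment.
open Classical in
noncomputable def sigExt {P 𝒳 : Type*} [Lattice P] [Nonempty P]
    (Ψf : Finset ((P ⊕ 𝒳) × (P ⊕ 𝒳))) (Y : Set 𝒳) (σ₀ : 𝒳 → P) (x : 𝒳) : P :=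
  if x ∈ Y then σ₀ x
  else if h : (LBnds Ψf Y σ₀ x).Nonempty then (LBnds Ψf Y σ₀ x).sup' h id else mVal Ψf σ₀

/-- Over a nonempty lattice, any assignment satisfying the constraints
of a closed, value-consistent Ψ whose variables all lie in Y extends to a model of Ψ
that agrees with it on Y. -/
theorem exists_model_extending_on_subset
    {P 𝒳 : Type*} [Lattice P] [Nonempty P]
    (Ψ : Set ((P ⊕ 𝒳) × (P ⊕ 𝒳))) (hfin : Ψ.Finite) (hwf : WellFormed Ψ)
    (hcl : Closed Ψ) (hvc : ValueConsistent Ψ)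
    (Y : Set 𝒳) (σ₀ : 𝒳 → P)
    (hσ₀ : ∀ c ∈ Ψ, VarsIn Y c.1 → VarsIn Y c.2 →
      ConstraintEval σ₀ c.1 ≤ ConstraintEval σ₀ c.2) :
    ∃ σ : 𝒳 → P, Models σ Ψ ∧ ∀ y ∈ Y, σ y = σ₀ y := by
  classical
  set Ψf : Finset ((P ⊕ 𝒳) × (P ⊕ 𝒳)) := hfin.toFinset with hΨf
  have hmemf : ∀ c : (P ⊕ 𝒳) × (P ⊕ 𝒳), c ∈ Ψf ↔ c ∈ Ψ := fun c => hfin.mem_toFinset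
  set σ : 𝒳 → P := sigExt Ψf Y σ₀ with hσdef
  have hσY : ∀ y ∈ Y, σ y = σ₀ y := fun y hy => by simp [hσdef, sigExt, hy]
  -- two-step transitive closure
  have step2 : ∀ {s t u : P ⊕ 𝒳}, (s, t) ∈ Ψ → (t, u) ∈ Ψ → ConRelTC Ψ s u := by
    intro s t u h1 h2
    exact Relation.TransGen.head (Or.inl h1) (Relation.TransGen.single (Or.inl h2))
  -- key lemma A: lower bounds of x are below any value bounding x above
  have keyA : ∀ x a, a ∈ LBnds Ψf Y σ₀ x → ∀ d, (Sum.inr x, Sum.inl d) ∈ Ψ → a ≤ d := by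
    intro x a ha d hd
    obtain ⟨c, hc, hc2, hc1, rfl⟩ := mem_LBnds.mp ha
    rw [hmemf] at hc
    obtain ⟨s, t⟩ := c
    simp only at hc2 hc1 ⊢
    subst hc2
    match s, hc1 with
    | Sum.inl b, _ =>
      refine hvc b d ⟨Sum.inr x, Or.inl hc⟩ ⟨Sum.inr x, Or.inr hd⟩ (step2 hc hd)
    | Sum.inr y, hy =>
      have hmem : (Sum.inr y, Sum.inl d) ∈ Ψ :=
        hcl _ _ (step2 hc hd) (Or.inl ⟨y, rfl⟩)
      exact hσ₀ _ hmem hy trivial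
  -- key lemma B: lower bounds of x are below σ₀ z for z ∈ Y with x ⊑ z
  have keyB : ∀ x a, a ∈ LBnds Ψf Y σ₀ x → ∀ z, z ∈ Y → (Sum.inr x, Sum.inr z) ∈ Ψ →
      a ≤ σ₀ z := by
    intro x a ha z hz hxz
    obtain ⟨c, hc, hc2, hc1, rfl⟩ := mem_LBnds.mp ha
    rw [hmemf] at hc
    obtain ⟨s, t⟩ := c
    simp only at hc2 hc1 ⊢
    subst hc2
    have hmem : (s, Sum.inr z) ∈ Ψ := hcl _ _ (step2 hc hxz) (Or.inr ⟨z, rfl⟩)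
    exact hσ₀ _ hmem hc1 hz
  -- key lemma C: lower bounds propagate along variable constraints
  have keyC : ∀ x a, a ∈ LBnds Ψf Y σ₀ x → ∀ z, (Sum.inr x, Sum.inr z) ∈ Ψ →
      a ∈ LBnds Ψf Y σ₀ z := by
    intro x a ha z hxz
    obtain ⟨c, hc, hc2, hc1, rfl⟩ := mem_LBnds.mp ha
    rw [hmemf] at hc
    obtain ⟨s, t⟩ := c
    simp only at hc2 hc1 ⊢
    subst hc2
    have hmem : (s, Sum.inr z) ∈ Ψ := hcl _ _ (step2 hc hxz) (Or.inr ⟨z, rfl⟩)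
    exact mem_LBnds.mpr ⟨(s, Sum.inr z), (hmemf _).mpr hmem, rfl, hc1, rfl⟩
  -- value of σ off Y
  have hσpos : ∀ x, x ∉ Y → ∀ h : (LBnds Ψf Y σ₀ x).Nonempty,
      σ x = (LBnds Ψf Y σ₀ x).sup' h id := by
    intro x hx h
    simp [hσdef, sigExt, hx, h]
  have hσneg : ∀ x, x ∉ Y → ¬ (LBnds Ψf Y σ₀ x).Nonempty → σ x = mVal Ψf σ₀ := by
    intro x hx h
    simp [hσdef, sigExt, hx, h]
  refine ⟨σ, ?_, hσY⟩
  intro c hc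
  have hcf : c ∈ Ψf := (hmemf c).mpr hc
  obtain ⟨s, t⟩ := c
  match s, t with
  | Sum.inl a, Sum.inl b => exact absurd (hwf _ hc) (by simp [IsConstraint])
  | Sum.inl d, Sum.inr x =>
    -- d ≤ σ x
    show d ≤ σ x
    by_cases hx : x ∈ Y
    · rw [hσY x hx]
      exact hσ₀ _ hc trivial hx
    · have hd : d ∈ LBnds Ψf Y σ₀ x :=
        mem_LBnds.mpr ⟨(Sum.inl d, Sum.inr x), hcf, rfl, trivial, rfl⟩
      rw [hσpos x hx ⟨d, hd⟩]
      exact Finset.le_sup' id hd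
  | Sum.inr x, Sum.inl d =>
    show σ x ≤ d
    by_cases hx : x ∈ Y
    · rw [hσY x hx]
      exact hσ₀ _ hc hx trivial
    · by_cases h : (LBnds Ψf Y σ₀ x).Nonempty
      · rw [hσpos x hx h]
        exact Finset.sup'_le h id (fun a ha => keyA x a ha d hc)
      · rw [hσneg x hx h]
        exact mVal_le_snd hcf
  | Sum.inr x, Sum.inr z =>
    show σ x ≤ σ z
    by_cases hx : x ∈ Y
    · rw [hσY x hx]
      by_cases hz : z ∈ Y
      · rw [hσY z hz]
        exact hσ₀ _ hc hx hz
      · have hmem : σ₀ x ∈ LBnds Ψf Y σ₀ z :=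
          mem_LBnds.mpr ⟨(Sum.inr x, Sum.inr z), hcf, rfl, hx, rfl⟩
        rw [hσpos z hz ⟨_, hmem⟩]
        exact Finset.le_sup' id hmem
    · by_cases h : (LBnds Ψf Y σ₀ x).Nonempty
      · rw [hσpos x hx h]
        by_cases hz : z ∈ Y
        · rw [hσY z hz]
          exact Finset.sup'_le h id (fun a ha => keyB x a ha z hz hc)
        · have hz' : (LBnds Ψf Y σ₀ z).Nonempty :=
            ⟨_, keyC x _ h.choose_spec z hc⟩
          rw [hσpos z hz hz']
          exact Finset.sup'_le h id
            (fun a ha => Finset.le_sup' id (keyC x a ha z hc))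
      · rw [hσneg x hx h]
        by_cases hz : z ∈ Y
        · rw [hσY z hz]
          exact mVal_le_snd hcf
        · by_cases hz' : (LBnds Ψf Y σ₀ z).Nonempty
          · rw [hσpos z hz hz']
            obtain ⟨a, ha⟩ := hz'
            obtain ⟨c', hc', _, _, rfl⟩ := mem_LBnds.mp ha
            exact le_trans (mVal_le_fst hc') (Finset.le_sup' id ha)
          · rw [hσneg z hz hz']
end

section
/- Let P be a lattice and Ψ₁, Ψ₂ finite sets of constraints over (P, 𝒳). Define the abstract join Ψ₁ ⊔♯ Ψ₂ to consist of: all variable constraints (Sum.inr x, Sum.inr y) lying in both Ψ₁ and Ψ₂; all lower-bound constraints (Sum.inl (d₁ ⊓ d₂), Sum.inr x) for which (Sum.inl d₁, Sum.inr x) ∈ Ψ₁ and (Sum.inl d₂, Sum.inr x) ∈ Ψ₂; and all upper-bound constraints (Sum.inr x, Sum.inl (d₁ ⊔ d₂)) for which (Sum.inr x, Sum.inl d₁) ∈ Ψ₁ and (Sum.inr x, Sum.inl d₂) ∈ Ψ₂. Then every model of Ψ₁ is a model of Ψ₁ ⊔♯ Ψ₂, and every model of Ψ₂ is a model of Ψ₁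 ⊔♯ Ψ₂. -/
/-- The abstract join of two constraint sets over a lattice. -/
def AbstractJoinLat {P 𝒳 : Type*} [Lattice P]
    (Ψ₁ Ψ₂ : Set ((P ⊕ 𝒳) × (P ⊕ 𝒳))) : Set ((P ⊕ 𝒳) × (P ⊕ 𝒳)) :=
  {c | (∃ x y : 𝒳, c = (Sum.inr x, Sum.inr y) ∧ c ∈ Ψ₁ ∧ c ∈ Ψ₂) ∨
       (∃ (d₁ d₂ : P) (x : 𝒳), (Sum.inl d₁, Sum.inr x) ∈ Ψ₁ ∧
         (Sum.inl d₂, Sum.inr x) ∈ Ψ₂ ∧ c = (Sum.inl (d₁ ⊓ d₂), Sum.inr x)) ∨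
       (∃ (d₁ d₂ : P) (x : 𝒳), (Sum.inr x, Sum.inl d₁) ∈ Ψ₁ ∧
         (Sum.inr x, Sum.inl d₂) ∈ Ψ₂ ∧ c = (Sum.inr x, Sum.inl (d₁ ⊔ d₂)))}

/-- Every model of Ψ₁ and every model of Ψ₂ is a model of the
abstract join Ψ₁ ⊔♯ Ψ₂ over a lattice. -/
theorem models_abstractJoinLat
    {P 𝒳 : Type*} [Lattice P]
    (Ψ₁ Ψ₂ : Set ((P ⊕ 𝒳) × (P ⊕ 𝒳))) (hfin₁ : Ψ₁.Finite) (hfin₂ : Ψ₂.Finite)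
    (hwf₁ : WellFormed Ψ₁) (hwf₂ : WellFormed Ψ₂) :
    (∀ σ : 𝒳 → P, Models σ Ψ₁ → Models σ (AbstractJoinLat Ψ₁ Ψ₂)) ∧
    (∀ σ : 𝒳 → P, Models σ Ψ₂ → Models σ (AbstractJoinLat Ψ₁ Ψ₂)) := by
  constructor
  · intro σ hσ c hc
    rcases hc with ⟨x, y, rfl, h1, _⟩ | ⟨d₁, d₂, x, h1, _, rfl⟩ | ⟨d₁, d₂, x, h1, _, rfl⟩
    · exact hσ _ h1
    · exact le_trans inf_le_left (hσ _ h1)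
    · exact le_trans (hσ _ h1 : σ x ≤ d₁) (le_sup_left : d₁ ≤ d₁ ⊔ d₂)
  · intro σ hσ c hc
    rcases hc with ⟨x, y, rfl, _, h2⟩ | ⟨d₁, d₂, x, _, h2, rfl⟩ | ⟨d₁, d₂, x, _, h2, rfl⟩
    · exact hσ _ h2
    · exact le_trans inf_le_right (hσ _ h2)
    · exact le_trans (hσ _ h2 : σ x ≤ d₂) (le_sup_right : d₂ ≤ d₁ ⊔ d₂)
end

section
/- Let P be any partial order and Ψ₁, Ψ₂ finite sets of constraints over (P, 𝒳). Define Ψ₁ ⊔♯ Ψ₂ to consist of: all variable constraints (Sum.inr x, Sum.inr y) lying in both Ψ₁ and Ψ₂; all lower-bound constraints (Sum.inl d₁, Sum.inr x) with (Sum.inl d₁, Sum.inr x) ∈ Ψ₁ such that there exists d₂ with (Sum.inl d₂, Sum.inr x) ∈ Ψ₂ and d₁ ≤ d₂, and symmetrically those (Sum.inl d₂, Sum.inr x) ∈ Ψ₂ for which some (Sum.inl d₁, Sum.inr x) ∈ Ψ₁ has d₂ ≤ d₁; and all upper-bound constraints (Sum.inr x, Sum.inl d₁) with (Sum.inr x,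 Sum.inl d₁) ∈ Ψ₁ such that there exists d₂ with (Sum.inr x, Sum.inl d₂) ∈ Ψ₂ and d₂ ≤ d₁, and symmetrically with the roles of Ψ₁ and Ψ₂ exchanged. Then every model of Ψ₁ is a model of Ψ₁ ⊔♯ Ψ₂, and every model of Ψ₂ is a model of Ψ₁ ⊔♯ Ψ₂. -/
/-- The abstract join of two constraint sets over an arbitrary partial order. -/
def AbstractJoinPO {P 𝒳 : Type*} [PartialOrder P]
    (Ψ₁ Ψ₂ : Set ((P ⊕ 𝒳) × (P ⊕ 𝒳))) : Set ((P ⊕ 𝒳) × (P ⊕ 𝒳)) :=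
  {c | (∃ x y : 𝒳, c = (Sum.inr x, Sum.inr y) ∧ c ∈ Ψ₁ ∧ c ∈ Ψ₂) ∨
       (∃ (d₁ : P) (x : 𝒳), c = (Sum.inl d₁, Sum.inr x) ∧
         ((c ∈ Ψ₁ ∧ ∃ d₂ : P, (Sum.inl d₂, Sum.inr x) ∈ Ψ₂ ∧ d₁ ≤ d₂) ∨
          (c ∈ Ψ₂ ∧ ∃ d₂ : P, (Sum.inl d₂, Sum.inr x) ∈ Ψ₁ ∧ d₁ ≤ d₂))) ∨
       (∃ (d₁ : P) (x : 𝒳), c = (Sum.inr x, Sum.inl d₁) ∧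
         ((c ∈ Ψ₁ ∧ ∃ d₂ : P, (Sum.inr x, Sum.inl d₂) ∈ Ψ₂ ∧ d₂ ≤ d₁) ∨
          (c ∈ Ψ₂ ∧ ∃ d₂ : P, (Sum.inr x, Sum.inl d₂) ∈ Ψ₁ ∧ d₂ ≤ d₁)))}

/-- Every model of Ψ₁ and every model of Ψ₂ is a model of the
abstract join Ψ₁ ⊔♯ Ψ₂ over an arbitrary partial order. -/
theorem models_abstractJoinPO
    {P 𝒳 : Type*} [PartialOrder P]
    (Ψ₁ Ψ₂ : Set ((P ⊕ 𝒳) × (P ⊕ 𝒳))) (hfin₁ : Ψ₁.Finite) (hfin₂ : Ψ₂.Finite)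
    (hwf₁ : WellFormed Ψ₁) (hwf₂ : WellFormed Ψ₂) :
    (∀ σ : 𝒳 → P, Models σ Ψ₁ → Models σ (AbstractJoinPO Ψ₁ Ψ₂)) ∧
    (∀ σ : 𝒳 → P, Models σ Ψ₂ → Models σ (AbstractJoinPO Ψ₁ Ψ₂)) := by

  constructor
  · intro σ hσ c hc
    rcases hc with ⟨x, y, rfl, h1, h2⟩ |
      ⟨d₁, x, rfl, ⟨h1, _⟩ | ⟨h2, d₂, hd₂, hle⟩⟩ |
      ⟨d₁, x, rfl, ⟨h1, _⟩ | ⟨h2, d₂, hd₂, hle⟩⟩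
    · exact hσ _ h1
    · exact hσ _ h1
    · exact le_trans hle (hσ _ hd₂)
    · exact hσ _ h1
    · exact le_trans (hσ (Sum.inr x, Sum.inl d₂) hd₂) hle
  · intro σ hσ c hc
    rcases hc with ⟨x, y, rfl, h1, h2⟩ |
      ⟨d₁, x, rfl, ⟨h1, d₂, hd₂, hle⟩ | ⟨h2, _⟩⟩ |
      ⟨d₁, x, rfl, ⟨h1, d₂, hd₂, hle⟩ | ⟨h2, _⟩⟩
    · exact hσ _ h2
    · exact le_trans hle (hσ _ hd₂)
    · exact hσ _ h2
    · exact le_trans (hσ (Sum.inr x, Sum.inl d₂) hd₂) hle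
    · exact hσ _ h2
end

section
/- (Upper-bound perturbation lemma.) Let P be a lattice, Ψ a finite set of constraints over (P, 𝒳), σ a model of Ψ, x a variable, and b₀ ∈ P such that b₀ ≤ b for every value b ∈ V_Ψ with (Sum.inr x, Sum.inl b) ∈ R_Ψ⁺. Define σ' z = σ z ⊔ b₀ if z = x or (Sum.inr x, Sum.inr z) ∈ R_Ψ⁺, and σ' z = σ z otherwise. Then σ' is a model of Ψ, and σ' x = σ x ⊔ b₀. -/
/-- Upper-bound perturbation lemma: joining b₀ onto x and everything
reachable from x preserves being a model, provided b₀ is below every upper bound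
entailed for x. -/
theorem upper_bound_perturbation
    {P 𝒳 : Type*} [Lattice P]
    (Ψ : Set ((P ⊕ 𝒳) × (P ⊕ 𝒳))) (hfin : Ψ.Finite) (hwf : WellFormed Ψ)
    (σ : 𝒳 → P) (hσ : Models σ Ψ) (x : 𝒳) (b₀ : P)
    (hb₀ : ∀ b ∈ Values Ψ, ConRelTC Ψ (Sum.inr x) (Sum.inl b) → b₀ ≤ b)
    (σ' : 𝒳 → P)
    (hσ'₁ : ∀ z : 𝒳, (z = x ∨ ConRelTC Ψ (Sum.inr x) (Sum.inr z)) → σ' z = σ z ⊔ b₀)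
    (hσ'₂ : ∀ z : 𝒳, ¬(z = x ∨ ConRelTC Ψ (Sum.inr x) (Sum.inr z)) → σ' z = σ z) :
    Models σ' Ψ ∧ σ' x = σ x ⊔ b₀ := by
  have hx : σ' x = σ x ⊔ b₀ := hσ'₁ x (Or.inl rfl)
  have hge : ∀ z, σ z ≤ σ' z := by
    intro z
    by_cases h : z = x ∨ ConRelTC Ψ (Sum.inr x) (Sum.inr z)
    · rw [hσ'₁ z h]; exact le_sup_left
    · rw [hσ'₂ z h]
  -- path from x to z for marked z
  have hpath : ∀ z : 𝒳, (z = x ∨ ConRelTC Ψ (Sum.inr x) (Sum.inr z)) →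
      ∀ t, (Sum.inr z, t) ∈ Ψ → ConRelTC Ψ (Sum.inr x) t := by
    rintro z (rfl | hz) t ht
    · exact Relation.TransGen.single (Or.inl ht)
    · exact Relation.TransGen.tail hz (Or.inl ht)
  refine ⟨?_, hx⟩
  rintro ⟨s, t⟩ hc
  have hwfc := hwf _ hc
  match s, t with
  | Sum.inl a, Sum.inl b => exact absurd hwfc (by simp [IsConstraint])
  | Sum.inl d, Sum.inr y =>
    exact le_trans (hσ _ hc) (hge y)
  | Sum.inr y, Sum.inr z =>
    by_cases h : y = x ∨ ConRelTC Ψ (Sum.inr x) (Sum.inr y)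
    · have hz : z = x ∨ ConRelTC Ψ (Sum.inr x) (Sum.inr z) :=
        Or.inr (hpath y h _ hc)
      show σ' y ≤ σ' z
      rw [hσ'₁ y h, hσ'₁ z hz]
      exact sup_le_sup_right (hσ _ hc) b₀
    · show σ' y ≤ σ' z
      rw [hσ'₂ y h]
      exact le_trans (hσ _ hc) (hge z)
  | Sum.inr y, Sum.inl d =>
    by_cases h : y = x ∨ ConRelTC Ψ (Sum.inr x) (Sum.inr y)
    · have hdV : d ∈ Values Ψ := ⟨Sum.inr y, Or.inr hc⟩
      have hbd : b₀ ≤ d := hb₀ d hdV (hpath y h _ hc)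
      show σ' y ≤ d
      rw [hσ'₁ y h]
      exact sup_le (hσ _ hc) hbd
    · show σ' y ≤ d
      rw [hσ'₂ y h]
      exact hσ _ hc
end

section
/- (Lower-bound perturbation lemma.) Let P be a lattice, Ψ a finite set of constraints over (P, 𝒳), σ a model of Ψ, x a variable, and a₀ ∈ P such that a ≤ a₀ for every value a ∈ V_Ψ with (Sum.inl a, Sum.inr x) ∈ R_Ψ⁺. Define σ' z = σ z ⊓ a₀ if z = x or (Sum.inr z, Sum.inr x) ∈ R_Ψ⁺, and σ' z = σ z otherwise. Then σ' is a model of Ψ, and σ' x = σ x ⊓ a₀. -/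
/-- Lower-bound perturbation lemma: meeting a₀ onto x and everything
from which x is reachable preserves being a model, provided a₀ is above every lower
bound entailed for x. -/
theorem lower_bound_perturbation
    {P 𝒳 : Type*} [Lattice P]
    (Ψ : Set ((P ⊕ 𝒳) × (P ⊕ 𝒳))) (hfin : Ψ.Finite) (hwf : WellFormed Ψ)
    (σ : 𝒳 → P) (hσ : Models σ Ψ) (x : 𝒳) (a₀ : P)
    (ha₀ : ∀ a ∈ Values Ψ, ConRelTC Ψ (Sum.inl a) (Sum.inr x) → a ≤ a₀)
    (σ' : 𝒳 → P)
    (hσ'₁ : ∀ z : 𝒳, (z = x ∨ ConRelTC Ψ (Sum.inr z) (Sum.inr x)) → σ' z = σ z ⊓ a₀)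
    (hσ'₂ : ∀ z : 𝒳, ¬(z = x ∨ ConRelTC Ψ (Sum.inr z) (Sum.inr x)) → σ' z = σ z) :
    Models σ' Ψ ∧ σ' x = σ x ⊓ a₀ := by
  have hle : ∀ z : 𝒳, σ' z ≤ σ z := by
    intro z
    by_cases h : z = x ∨ ConRelTC Ψ (Sum.inr z) (Sum.inr x)
    · rw [hσ'₁ z h]; exact inf_le_left
    · rw [hσ'₂ z h]
  constructor
  · rintro ⟨s, t⟩ hc
    match s, t with
    | Sum.inl a, Sum.inl b => exact absurd (hwf _ hc) (by simp [IsConstraint])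
    | Sum.inl d, Sum.inr y =>
      have h1 : d ≤ σ y := hσ _ hc
      by_cases h : y = x ∨ ConRelTC Ψ (Sum.inr y) (Sum.inr x)
      · have hstep : ConRel Ψ (Sum.inl d) (Sum.inr y) := Or.inl hc
        have htc : ConRelTC Ψ (Sum.inl d) (Sum.inr x) := by
          rcases h with rfl | h
          · exact Relation.TransGen.single hstep
          · exact Relation.TransGen.head hstep h
        have hd : d ∈ Values Ψ := ⟨Sum.inr y, Or.inl hc⟩
        show d ≤ ConstraintEval σ' (Sum.inr y)
        simp only [ConstraintEval, hσ'₁ y h]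
        exact le_inf h1 (ha₀ d hd htc)
      · show d ≤ ConstraintEval σ' (Sum.inr y)
        simp only [ConstraintEval, hσ'₂ y h]; exact h1
    | Sum.inr y, Sum.inl d =>
      exact le_trans (hle y) (hσ _ hc)
    | Sum.inr y, Sum.inr z =>
      have h1 : σ y ≤ σ z := hσ _ hc
      show σ' y ≤ σ' z
      by_cases h : z = x ∨ ConRelTC Ψ (Sum.inr z) (Sum.inr x)
      · have hy : y = x ∨ ConRelTC Ψ (Sum.inr y) (Sum.inr x) := by
          right
          rcases h with rfl | h
          · exact Relation.TransGen.single (Or.inl hc)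
          · exact Relation.TransGen.head (Or.inl hc) h
        rw [hσ'₁ y hy, hσ'₁ z h]
        exact inf_le_inf_right _ h1
      · rw [hσ'₂ z h]; exact le_trans (hle y) h1
  · exact hσ'₁ x (Or.inl rfl)
end

section
/- (Characterization of implied lower bounds.) Let P be a lattice, Ψ a finite satisfiable set of constraints over (P, 𝒳), x a variable, L_Ψ(x) = {a ∈ V_Ψ : (Sum.inl a, Sum.inr x) ∈ R_Ψ⁺} nonempty, and ℓ ∈ P with IsLUB L_Ψ(x) ℓ. Then for every d ∈ P: every model σ of Ψ satisfies d ≤ σ x if and only if d ≤ ℓ. -/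
theorem tc_le_aux' {P 𝒳 : Type*} [Preorder P] {Ψ : Set ((P ⊕ 𝒳) × (P ⊕ 𝒳))}
    {σ : 𝒳 → P} (hσ : Models σ Ψ) {s t : P ⊕ 𝒳} (h : ConRelTC Ψ s t) :
    ConstraintEval σ s ≤ ConstraintEval σ t := by
  induction h with
  | single h =>
    rcases h with h | ⟨a, b, _, _, hab, rfl, rfl⟩
    · exact hσ _ h
    · exact hab
  | tail _ h ih =>
    refine ih.trans ?_
    rcases h with h | ⟨a, b, _, _, hab, rfl, rfl⟩
    · exact hσ _ h
    · exact hab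

theorem values_fin' {P 𝒳 : Type*} {Ψ : Set ((P ⊕ 𝒳) × (P ⊕ 𝒳))} (hfin : Ψ.Finite) :
    (Values Ψ).Finite := by
  have hsub : Values Ψ ⊆ Sum.inl ⁻¹' ((Prod.fst '' Ψ) ∪ (Prod.snd '' Ψ)) := by
    rintro a ⟨t, h | h⟩
    · exact Or.inl ⟨_, h, rfl⟩
    · exact Or.inr ⟨_, h, rfl⟩
  exact (((hfin.image _).union (hfin.image _)).preimage
    (Sum.inl_injective.injOn)).subset hsub

/-- Characterization of implied lower bounds: d is a lower bound for
x in every model of Ψ iff d is below the least upper bound ℓ of the entailed lower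
bounds of x. -/
theorem implied_lower_bounds_characterization
    {P 𝒳 : Type*} [Lattice P]
    (Ψ : Set ((P ⊕ 𝒳) × (P ⊕ 𝒳))) (hfin : Ψ.Finite) (hwf : WellFormed Ψ)
    (hsat : Satisfiable Ψ) (x : 𝒳)
    (hne : {a : P | a ∈ Values Ψ ∧ ConRelTC Ψ (Sum.inl a) (Sum.inr x)}.Nonempty)
    (ℓ : P) (hℓ : IsLUB {a : P | a ∈ Values Ψ ∧ ConRelTC Ψ (Sum.inl a) (Sum.inr x)} ℓ)
    (d : P) :
    (∀ σ : 𝒳 → P, Models σ Ψ → d ≤ σ x) ↔ d ≤ ℓ := by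
  classical
  obtain ⟨σ0, hσ0⟩ := hsat
  have hV : (Values Ψ).Finite := values_fin' hfin
  set V : Finset P := hV.toFinset with hVdef
  -- the entailed lower bounds of a variable y, as a Finset
  set L : 𝒳 → Finset P := fun y => V.filter (fun a => ConRelTC Ψ (Sum.inl a) (Sum.inr y))
    with hLdef
  have hLmem : ∀ y a, a ∈ L y ↔ a ∈ Values Ψ ∧ ConRelTC Ψ (Sum.inl a) (Sum.inr y) := by
    intro y a
    simp [hLdef, hVdef, Set.Finite.mem_toFinset]
  -- V is nonempty
  obtain ⟨a0, ha0V, ha0tc⟩ := hne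
  have hVne : V.Nonempty := ⟨a0, by simp [hVdef, Set.Finite.mem_toFinset]; exact ha0V⟩
  have hLxne : (L x).Nonempty := ⟨a0, (hLmem x a0).2 ⟨ha0V, ha0tc⟩⟩
  set m : P := V.inf' hVne id with hmdef
  set σ' : 𝒳 → P := fun y =>
    if h : (L y).Nonempty then (L y).sup' h id else σ0 y ⊓ m with hσ'def
  have hσ'model : Models σ' Ψ := by
    rintro ⟨s, t⟩ hc
    rcases s with a | y <;> rcases t with b | z
    · exact absurd (hwf _ hc) (by simp [IsConstraint])
    · -- lower bound a ⊑ z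
      have haV : a ∈ Values Ψ := ⟨Sum.inr z, Or.inl hc⟩
      have haL : a ∈ L z := (hLmem z a).2 ⟨haV, Relation.TransGen.single (Or.inl hc)⟩
      have hLz : (L z).Nonempty := ⟨a, haL⟩
      show a ≤ σ' z
      simp only [hσ'def, dif_pos hLz]
      exact Finset.le_sup' id haL
    · -- upper bound y ⊑ b
      show σ' y ≤ b
      simp only [hσ'def]
      split
      · next h =>
        apply Finset.sup'_le
        intro a haL
        have := (hLmem y a).1 haL
        have htc : ConRelTC Ψ (Sum.inl a) (Sum.inl b) :=
          Relation.TransGen.tail this.2 (Or.inl hc)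
        exact tc_le_aux' hσ0 htc
      · exact le_trans inf_le_left (hσ0 _ hc)
    · -- variable constraint y ⊑ z
      show σ' y ≤ σ' z
      simp only [hσ'def]
      by_cases hy : (L y).Nonempty
      · have hsub : ∀ a ∈ L y, a ∈ L z := by
          intro a haL
          have := (hLmem y a).1 haL
          exact (hLmem z a).2 ⟨this.1, Relation.TransGen.tail this.2 (Or.inl hc)⟩
        have hz : (L z).Nonempty := ⟨hy.choose, hsub _ hy.choose_spec⟩
        rw [dif_pos hy, dif_pos hz]
        exact Finset.sup'_le _ _ fun a haL => Finset.le_sup' id (hsub a haL)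
      · rw [dif_neg hy]
        by_cases hz : (L z).Nonempty
        · rw [dif_pos hz]
          obtain ⟨a, haL⟩ := hz
          have haV : a ∈ V := Finset.mem_filter.1 haL |>.1
          calc σ0 y ⊓ m ≤ m := inf_le_right
            _ ≤ a := Finset.inf'_le id haV
            _ ≤ (L z).sup' ⟨a, haL⟩ id := Finset.le_sup' id haL
        · rw [dif_neg hz]
          exact inf_le_inf_right m (hσ0 _ hc)
  constructor
  · intro h
    have hd : d ≤ σ' x := h σ' hσ'model
    refine hd.trans ?_
    show (if h : (L x).Nonempty then (L x).sup' h id else σ0 x ⊓ m) ≤ ℓ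
    rw [dif_pos hLxne]
    exact Finset.sup'_le _ _ fun a haL => hℓ.1 ((hLmem x a).1 haL)
  · intro hd σ hσ
    refine hd.trans (hℓ.2 ?_)
    rintro a ⟨haV, hatc⟩
    exact tc_le_aux' hσ hatc
end

section
/- (Characterization of implied upper bounds.) Let P be a lattice, Ψ a finite satisfiable set of constraints over (P, 𝒳), x a variable, U_Ψ(x) = {b ∈ V_Ψ : (Sum.inr x, Sum.inl b) ∈ R_Ψ⁺} nonempty, and u ∈ P with IsGLB U_Ψ(x) u. Then for every d ∈ P: every model σ of Ψ satisfies σ x ≤ d if and only if u ≤ d. -/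
/-- Characterization of implied upper bounds: d is an upper bound for
x in every model of Ψ iff d is above the greatest lower bound u of the entailed upper
bounds of x. -/
theorem implied_upper_bounds_characterization
    {P 𝒳 : Type*} [Lattice P]
    (Ψ : Set ((P ⊕ 𝒳) × (P ⊕ 𝒳))) (hfin : Ψ.Finite) (hwf : WellFormed Ψ)
    (hsat : Satisfiable Ψ) (x : 𝒳)
    (hne : {b : P | b ∈ Values Ψ ∧ ConRelTC Ψ (Sum.inr x) (Sum.inl b)}.Nonempty)
    (u : P) (hu : IsGLB {b : P | b ∈ Values Ψ ∧ ConRelTC Ψ (Sum.inr x) (Sum.inl b)} u)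
    (d : P) :
    (∀ σ : 𝒳 → P, Models σ Ψ → σ x ≤ d) ↔ u ≤ d := by
  constructor
  · intro h
    classical
    obtain ⟨σ₀, hσ₀⟩ := hsat
    set M : 𝒳 → Prop := fun y => y = x ∨ ConRelTC Ψ (Sum.inr x) (Sum.inr y) with hM
    set σ' : 𝒳 → P := fun y => if M y then σ₀ y ⊔ u else σ₀ y with hσ'
    have hstep : ∀ y, M y → ∀ t, ConRel Ψ (Sum.inr y) t → ConRelTC Ψ (Sum.inr x) t := by
      intro y hy t hrel
      cases hy with
      | inl h' => subst h'; exact Relation.TransGen.single hrel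
      | inr h' => exact h'.tail hrel
    have hmod : Models σ' Ψ := by
      intro c hc
      have h0 := hσ₀ c hc
      obtain ⟨s, t⟩ := c
      cases s with
      | inl a =>
        cases t with
        | inl b => exact h0
        | inr y =>
          simp only [ConstraintEval] at h0 ⊢
          refine le_trans h0 ?_
          by_cases hy : M y <;> simp [hσ', hy]
      | inr y =>
        cases t with
        | inl b =>
          simp only [ConstraintEval] at h0 ⊢
          by_cases hy : M y
          · simp only [hσ', if_pos hy]
            refine sup_le h0 (hu.1 ?_)
            exact ⟨⟨Sum.inr y, Or.inr hc⟩, hstep y hy _ (Or.inl hc)⟩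
          · simpa [hσ', if_neg hy] using h0
        | inr z =>
          simp only [ConstraintEval] at h0 ⊢
          by_cases hy : M y
          · have hz : M z := Or.inr (hstep y hy _ (Or.inl hc))
            simp only [hσ', if_pos hy, if_pos hz]
            exact sup_le_sup_right h0 u
          · simp only [hσ', if_neg hy]
            by_cases hz : M z
            · simp only [if_pos hz]; exact h0.trans le_sup_left
            · simpa [if_neg hz] using h0
    have hx : M x := Or.inl rfl
    calc u ≤ σ' x := by simp [hσ', if_pos hx]
      _ ≤ d := h σ' hmod
  · intro hud σ hσ
    have key : ∀ s t, ConRelTC Ψ s t → ConstraintEval σ s ≤ ConstraintEval σ t := by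
      have step : ∀ s t, ConRel Ψ s t → ConstraintEval σ s ≤ ConstraintEval σ t := by
        rintro s t (hmem | ⟨a, b, _, _, hab, rfl, rfl⟩)
        · exact hσ _ hmem
        · exact hab
      intro s t h
      induction h with
      | single h1 => exact step _ _ h1
      | tail _ h1 ih => exact ih.trans (step _ _ h1)
    have hlb : σ x ∈ lowerBounds {b : P | b ∈ Values Ψ ∧ ConRelTC Ψ (Sum.inr x) (Sum.inl b)} := by
      intro b hb
      exact key _ _ hb.2
    exact (hu.2 hlb).trans hud
end

section
/- (Non-implication of variable constraints.) Let P be a lattice, Ψ a finite satisfiable set of constraints over (P, 𝒳), and x, y distinct variables with (Sum.inr x, Sum.inr y) ∉ R_Ψ⁺. Suppose U_Ψ(x) = {b ∈ V_Ψ : (Sum.inr x, Sum.inl b) ∈ R_Ψ⁺} and L_Ψ(y) = {a ∈ V_Ψ : (Sum.inl a, Sum.inr y) ∈ R_Ψ⁺} are nonempty, u ∈ P satisfies IsGLB U_Ψ(x) u, ℓ ∈ P satisfies IsLUB L_Ψ(y) ℓ, and ¬(u ≤ ℓ). Then there exists a model σ' of Ψ with ¬(σ' x ≤ σ' y). -/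
/-- Non-implication of variable constraints: if x ⊑ y is not in
R_Ψ⁺ and the glb of the entailed upper bounds of x is not below the lub of the
entailed lower bounds of y, then some model of Ψ violates x ⊑ y. -/
theorem exists_model_violating_var_constraint
    {P 𝒳 : Type*} [Lattice P]
    (Ψ : Set ((P ⊕ 𝒳) × (P ⊕ 𝒳))) (hfin : Ψ.Finite) (hwf : WellFormed Ψ)
    (hsat : Satisfiable Ψ) (x y : 𝒳) (hxy : x ≠ y)
    (hnr : ¬ ConRelTC Ψ (Sum.inr x) (Sum.inr y))
    (hUne : {b : P | b ∈ Values Ψ ∧ ConRelTC Ψ (Sum.inr x) (Sum.inl b)}.Nonempty)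
    (hLne : {a : P | a ∈ Values Ψ ∧ ConRelTC Ψ (Sum.inl a) (Sum.inr y)}.Nonempty)
    (u : P) (hu : IsGLB {b : P | b ∈ Values Ψ ∧ ConRelTC Ψ (Sum.inr x) (Sum.inl b)} u)
    (ℓ : P) (hℓ : IsLUB {a : P | a ∈ Values Ψ ∧ ConRelTC Ψ (Sum.inl a) (Sum.inr y)} ℓ)
    (hul : ¬ u ≤ ℓ) :
    ∃ σ' : 𝒳 → P, Models σ' Ψ ∧ ¬ σ' x ≤ σ' y := by
  classical
  obtain ⟨σ, hσ⟩ := hsat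
  set S : 𝒳 → Prop := fun z => z = x ∨ ConRelTC Ψ (Sum.inr x) (Sum.inr z) with hS
  set T : 𝒳 → Prop := fun z => z = y ∨ ConRelTC Ψ (Sum.inr z) (Sum.inr y) with hT
  set σ1 : 𝒳 → P := fun z => if S z then σ z ⊔ u else σ z with hσ1
  set σ2 : 𝒳 → P := fun z => if T z then σ1 z ⊓ ℓ else σ1 z with hσ2
  have hσ1le : ∀ z, σ z ≤ σ1 z := by
    intro z; simp only [hσ1]; split <;> simp
  have hσ2le : ∀ z, σ2 z ≤ σ1 z := by
    intro z; simp only [hσ2]; split <;> simp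
  -- σ1 respects variable constraints
  have hvar1 : ∀ z w : 𝒳, (Sum.inr z, Sum.inr w) ∈ Ψ → σ1 z ≤ σ1 w := by
    intro z w hc
    by_cases hz : S z
    · have hw : S w := by
        rcases hz with rfl | hz
        · exact Or.inr (Relation.TransGen.single (Or.inl hc))
        · exact Or.inr (Relation.TransGen.tail hz (Or.inl hc))
      simp only [hσ1, if_pos hz, if_pos hw]
      exact sup_le_sup_right (hσ _ hc) u
    · simp only [hσ1, if_neg hz]
      have := hσ _ hc
      exact le_trans this (hσ1le w)
  refine ⟨σ2, ?_, ?_⟩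
  · rintro ⟨s, t⟩ hc
    match s, t with
    | Sum.inl a, Sum.inl b => exact hσ _ hc
    | Sum.inl d, Sum.inr w =>
      have hd : d ≤ σ1 w := le_trans (hσ _ hc) (hσ1le w)
      show d ≤ σ2 w
      simp only [hσ2]
      split
      · rename_i hw
        refine le_inf hd ?_
        have hdV : d ∈ Values Ψ := ⟨Sum.inr w, Or.inl hc⟩
        have hdy : ConRelTC Ψ (Sum.inl d) (Sum.inr y) := by
          rcases hw with rfl | hw
          · exact Relation.TransGen.single (Or.inl hc)
          · exact Relation.TransGen.head (Or.inl hc) hw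
        exact hℓ.1 ⟨hdV, hdy⟩
      · exact hd
    | Sum.inr z, Sum.inl d =>
      show σ2 z ≤ d
      refine le_trans (hσ2le z) ?_
      simp only [hσ1]
      split
      · rename_i hz
        refine sup_le (hσ _ hc) ?_
        have hdV : d ∈ Values Ψ := ⟨Sum.inr z, Or.inr hc⟩
        have hxd : ConRelTC Ψ (Sum.inr x) (Sum.inl d) := by
          rcases hz with rfl | hz
          · exact Relation.TransGen.single (Or.inl hc)
          · exact Relation.TransGen.tail hz (Or.inl hc)
        exact hu.1 ⟨hdV, hxd⟩
      · exact hσ _ hc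
    | Sum.inr z, Sum.inr w =>
      show σ2 z ≤ σ2 w
      by_cases hw : T w
      · have hz : T z := by
          rcases hw with rfl | hw
          · exact Or.inr (Relation.TransGen.single (Or.inl hc))
          · exact Or.inr (Relation.TransGen.head (Or.inl hc) hw)
        simp only [hσ2, if_pos hz, if_pos hw]
        exact inf_le_inf_right ℓ (hvar1 z w hc)
      · simp only [hσ2, if_neg hw]
        exact le_trans (hσ2le z) (hvar1 z w hc)
  · intro hle
    have hSx : S x := Or.inl rfl
    have hTx : ¬ T x := by
      rintro (rfl | h)
      · exact hxy rfl
      · exact hnr h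
    have hTy : T y := Or.inl rfl
    have h1 : u ≤ σ2 x := by
      simp only [hσ2, if_neg hTx, hσ1, if_pos hSx]
      exact le_sup_right
    have h2 : σ2 y ≤ ℓ := by
      simp only [hσ2, if_pos hTy]
      exact inf_le_right
    exact hul (le_trans h1 (le_trans hle h2))
end
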